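/- Suppose the homogeneous noncommutative polynomial p of degree d with coefficient function P satisfies the compatibility condition, and let A : Fin t → Fin g → ℂ. Then p = ∑_{s : Fin t} (∑_{j : Fin g} A(s,j) • x_j)^d holds in the free algebra FreeAlgebra ℂ (Fin g) if and only if the commutative collapse satisfies p^c = ∑_{s : Fin t} (∑_{j : Fin g} A(s,j) • X_j)^d in MvPolynomial (Fin g) ℂ. In particular, p has a t-term NC Waring decomposition if and only if p^c has a t-term commutative Waring decomposition into d-th powers of linear forms. -/

import Mathlib

open scoped BigOperators

/-- The ordered noncommutative word `x_{α 0} x_{α 1} ⋯ x_{α (d-1)}` in the free algebra. -/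
noncomputable def ncWord {g d : ℕ} (α : Fin d → Fin g) : FreeAlgebra ℂ (Fin g) :=
  (List.ofFn fun i => FreeAlgebra.ι ℂ (α i)).prod

/-- `1_j^α`: the number of indices `i` with `α i = j`. -/
def wordCount {g d : ℕ} (α : Fin d → Fin g) (j : Fin g) : ℕ :=
  (Finset.univ.filter fun i => α i = j).card

/-! Expanding the powers, `∑ s, (∑ j, A s j • x j) ^ d = ∑ α, Q α • x^α` with
`Q α = ∑ s, ∏ i, A s (α i)`, both in the free algebra and in the polynomial ring, and `Q` depends
only on the letter counts of `α`. Applying the collapse `x j ↦ X j` gives one implication.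
Conversely, if `R` depends only on letter counts, the coefficient of `∏ i, X (β i)` in
`∑ α, R α • ∏ i, X (α i)` is the number of rearrangements of `β` times `R β`; so the commutative
identity forces `P = Q`. -/

open Finset MvPolynomial

section PowerExpansion

variable {S A ι : Type*} [CommSemiring S] [Semiring A] [Algebra S A] [Fintype ι]

theorem sum_smul_pow_eq_sum_smul_ofFn_prod (c : ι → S) (v : ι → A) (d : ℕ) :
    (∑ j, c j • v j) ^ d
      = ∑ α : Fin d → ι, (∏ i, c (α i)) • (List.ofFn fun i => v (α i)).prod := by
  rw [← MultilinearMap.mkPiAlgebraFin_apply_const (R := S), MultilinearMap.map_sum]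
  simp_rw [MultilinearMap.map_smul_univ, MultilinearMap.mkPiAlgebraFin_apply]

theorem sum_sum_smul_pow_eq_sum_smul_ofFn_prod {τ : Type*} [Fintype τ] (B : τ → ι → S)
    (v : ι → A) (d : ℕ) :
    ∑ s, (∑ j, B s j • v j) ^ d
      = ∑ α : Fin d → ι, (∑ s, ∏ i, B s (α i)) • (List.ofFn fun i => v (α i)).prod := by
  simp_rw [sum_smul_pow_eq_sum_smul_ofFn_prod, sum_smul]
  exact sum_comm

end PowerExpansion

section LetterCounts

variable {g d : ℕ}

def IsWordCompatible {M : Type*} (P : (Fin d → Fin g) → M) : Prop :=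
  ∀ α α' : Fin d → Fin g, (∀ j, wordCount α j = wordCount α' j) → P α = P α'

noncomputable def wordDegree (α : Fin d → Fin g) : Fin g →₀ ℕ :=
  ∑ i, Finsupp.single (α i) 1

theorem wordDegree_apply (α : Fin d → Fin g) (j : Fin g) : wordDegree α j = wordCount α j := by
  simp [wordDegree, Finsupp.finsetSum_apply, Finsupp.single_apply, wordCount]

theorem prod_comp_eq_prod_pow_wordCount {M : Type*} [CommMonoid M] (c : Fin g → M)
    (α : Fin d → Fin g) : ∏ i, c (α i) = ∏ j, c j ^ wordCount α j := by
  rw [← prod_fiberwise univ α fun i => c (α i)]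
  refine prod_congr rfl fun j _ => ?_
  rw [wordCount, ← prod_const]
  exact prod_congr rfl fun i hi => by rw [(mem_filter.1 hi).2]

theorem isWordCompatible_sum_prod {τ M : Type*} [Fintype τ] [CommSemiring M] (B : τ → Fin g → M) :
    IsWordCompatible fun α : Fin d → Fin g => ∑ s, ∏ i, B s (α i) := by
  intro α α' h
  simp_rw [prod_comp_eq_prod_pow_wordCount, h]

end LetterCounts

section CommutativeCollapse

variable {g d : ℕ} {R : Type*} [CommSemiring R]

theorem prod_X_eq_monomial_wordDegree (α : Fin d → Fin g) :
    (∏ i, X (α i) : MvPolynomial (Fin g) R) = monomial (wordDegree α) 1 :=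
  (monomial_sum_one _ _).symm

theorem coeff_wordDegree_sum_smul_prod_X {P : (Fin d → Fin g) → R} (hP : IsWordCompatible P)
    (β : Fin d → Fin g) :
    coeff (wordDegree β) (∑ α, P α • ∏ i, X (α i))
      = #{α : Fin d → Fin g | wordDegree α = wordDegree β} • P β := by
  classical
  simp_rw [prod_X_eq_monomial_wordDegree, coeff_sum, coeff_smul, coeff_monomial, smul_eq_mul,
    mul_ite, mul_one, mul_zero, ← sum_filter, ← sum_const]
  refine sum_congr rfl fun α hα => hP α β fun j => ?_
  rw [← wordDegree_apply, ← wordDegree_apply, (mem_filter.1 hα).2]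

theorem eq_of_sum_smul_prod_X_eq [IsAddTorsionFree R] {P Q : (Fin d → Fin g) → R}
    (hP : IsWordCompatible P) (hQ : IsWordCompatible Q)
    (h : ∑ α, P α • (∏ i, X (α i) : MvPolynomial (Fin g) R) = ∑ α, Q α • ∏ i, X (α i)) :
    P = Q := by
  funext β
  have hcoeff := congrArg (coeff (wordDegree β)) h
  rw [coeff_wordDegree_sum_smul_prod_X hP, coeff_wordDegree_sum_smul_prod_X hQ] at hcoeff
  exact nsmul_right_injective (card_ne_zero_of_mem (a := β) (by simp)) hcoeff

theorem lift_X_ncWord (α : Fin d → Fin g) :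
    FreeAlgebra.lift ℂ X (ncWord α) = ∏ i, (X (α i) : MvPolynomial (Fin g) ℂ) := by
  simp [ncWord, map_list_prod, List.prod_ofFn]

end CommutativeCollapse

theorem ncWaring_iff_commWaring {g d t : ℕ} {P : (Fin d → Fin g) → ℂ} (hP : IsWordCompatible P)
    (A : Fin t → Fin g → ℂ) :
    ∑ α, P α • ncWord α = ∑ s, (∑ j, A s j • FreeAlgebra.ι ℂ j) ^ d
      ↔ ∑ α, P α • ∏ i, (X (α i) : MvPolynomial (Fin g) ℂ) = ∑ s, (∑ j, A s j • X j) ^ d := by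
  have hnc : ∑ s, (∑ j, A s j • FreeAlgebra.ι ℂ j) ^ d
      = ∑ α, (∑ s, ∏ i, A s (α i)) • ncWord α :=
    sum_sum_smul_pow_eq_sum_smul_ofFn_prod A _ d
  have hcomm : ∑ s, (∑ j, A s j • X j) ^ d
      = ∑ α : Fin d → Fin g, (∑ s, ∏ i, A s (α i)) • ∏ i, (X (α i) : MvPolynomial (Fin g) ℂ) := by
    simp_rw [sum_sum_smul_pow_eq_sum_smul_ofFn_prod A, List.prod_ofFn]
  rw [hnc, hcomm]
  refine ⟨fun h => ?_, fun h => by rw [eq_of_sum_smul_prod_X_eq hP (isWordCompatible_sum_prod A) h]⟩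
  simpa [lift_X_ncWord] using congrArg (FreeAlgebra.lift ℂ (X : Fin g → MvPolynomial (Fin g) ℂ)) h

theorem stmt4_general (g d t : ℕ)
    (P : (Fin d → Fin g) → ℂ)
    (hcompat : ∀ α α' : Fin d → Fin g,
      (∀ j : Fin g, wordCount α j = wordCount α' j) → P α = P α')
    (A : Fin t → Fin g → ℂ) :
    (((∑ α : Fin d → Fin g, P α • ncWord α)
        = ∑ s : Fin t, (∑ j : Fin g, A s j • FreeAlgebra.ι ℂ j) ^ d)
      ↔ ((∑ α : Fin d → Fin g, P α • ∏ i : Fin d, MvPolynomial.X (α i)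
            : MvPolynomial (Fin g) ℂ)
          = ∑ s : Fin t, (∑ j : Fin g, A s j • MvPolynomial.X j) ^ d))
    ∧
    ((∃ B : Fin t → Fin g → ℂ,
        (∑ α : Fin d → Fin g, P α • ncWord α)
          = ∑ s : Fin t, (∑ j : Fin g, B s j • FreeAlgebra.ι ℂ j) ^ d)
      ↔ (∃ B : Fin t → Fin g → ℂ,
          (∑ α : Fin d → Fin g, P α • ∏ i : Fin d, MvPolynomial.X (α i)
              : MvPolynomial (Fin g) ℂ)
            = ∑ s : Fin t, (∑ j : Fin g, B s j • MvPolynomial.X j) ^ d)) :=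
  ⟨ncWaring_iff_commWaring hcompat A, exists_congr fun B => ncWaring_iff_commWaring hcompat B⟩

theorem stmt4 (g d t : ℕ) (hg : 1 ≤ g) (hd : 1 ≤ d) (ht : 1 ≤ t)
    (P : (Fin d → Fin g) → ℂ)
    (hcompat : ∀ α α' : Fin d → Fin g,
      (∀ j : Fin g, wordCount α j = wordCount α' j) → P α = P α')
    (A : Fin t → Fin g → ℂ) :
    (((∑ α : Fin d → Fin g, P α • ncWord α)
        = ∑ s : Fin t, (∑ j : Fin g, A s j • FreeAlgebra.ι ℂ j) ^ d)
      ↔ ((∑ α : Fin d → Fin g, P α • ∏ i : Fin d, MvPolynomial.X (α i)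
            : MvPolynomial (Fin g) ℂ)
          = ∑ s : Fin t, (∑ j : Fin g, A s j • MvPolynomial.X j) ^ d))
    ∧
    ((∃ B : Fin t → Fin g → ℂ,
        (∑ α : Fin d → Fin g, P α • ncWord α)
          = ∑ s : Fin t, (∑ j : Fin g, B s j • FreeAlgebra.ι ℂ j) ^ d)
      ↔ (∃ B : Fin t → Fin g → ℂ,
          (∑ α : Fin d → Fin g, P α • ∏ i : Fin d, MvPolynomial.X (α i)
              : MvPolynomial (Fin g) ℂ)
            = ∑ s : Fin t, (∑ j : Fin g, B s j • MvPolynomial.X j) ^ d)) :=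
  stmt4_general g d t P hcompat A
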